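/- arXiv:2501.02817 — 6 statements merged into one kernel-verified Lean document; each statement's English description precedes it below -/
import Mathlib

section
/- Let f₁ : ℝ → ℝ be continuous on [0,2π] and differentiable on (0,2π), let M ∈ ℕ with M ≥ 1, and let w₁, w₂ ∈ ℕ with w₁ < w₂. Set τ₁ = 2π/(w₁(M+1)) and τ₂ = 2π/(w₂(M+1)). Fix t such that all evaluation points t + (i−1)τ₁ and t + (i−1)τ₂ (i = 1,…,M+1) lie in [0,2π]. Then there exist points cᵢ ∈ (t + 2(i−1)π/(w₂(M+1)), t + 2(i−1)π/(w₁(M+1))) for i = 2,…,M+1 such that ‖SW_{M,τ₂}f₁(t) − SW_{M,τ₁}f₁(t)‖₂ = ( Σ_{i=2}^{M+1} |f₁'(cᵢ)|² · ((i−1)/(M+1))² · |2π/w₁ − 2π/w₂|² )^{1/2}, where ‖·‖₂ is the Euclidean norm on ℝ^{M+1}. -/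
/-- The sliding window embedding (SWE) of `f` at time `t` with embedding dimension `M`
and time lag `τ`: the vector `(f t, f (t+τ), …, f (t+Mτ)) ∈ ℝ^{M+1}` with Euclidean norm. -/
noncomputable def SWE (f : ℝ → ℝ) (M : ℕ) (τ : ℝ) (t : ℝ) :
    EuclideanSpace ℝ (Fin (M + 1)) :=
  WithLp.toLp 2 (fun i : Fin (M + 1) => f (t + (i : ℕ) * τ))

theorem stmt_0 (f₁ : ℝ → ℝ) (M w₁ w₂ : ℕ) (hM : 1 ≤ M) (hw₁ : 0 < w₁) (hw : w₁ < w₂)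
    (hcont : ContinuousOn f₁ (Set.Icc 0 (2 * Real.pi)))
    (hdiff : DifferentiableOn ℝ f₁ (Set.Ioo 0 (2 * Real.pi)))
    (t : ℝ)
    (ht₁ : ∀ i : Fin (M + 1),
      t + (i : ℕ) * (2 * Real.pi / ((w₁ : ℝ) * (M + 1))) ∈ Set.Icc 0 (2 * Real.pi))
    (ht₂ : ∀ i : Fin (M + 1),
      t + (i : ℕ) * (2 * Real.pi / ((w₂ : ℝ) * (M + 1))) ∈ Set.Icc 0 (2 * Real.pi)) :
    ∃ c : Fin M → ℝ,
      (∀ i : Fin M,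
        c i ∈ Set.Ioo (t + 2 * ((i : ℕ) + 1) * Real.pi / ((w₂ : ℝ) * (M + 1)))
          (t + 2 * ((i : ℕ) + 1) * Real.pi / ((w₁ : ℝ) * (M + 1)))) ∧
      ‖SWE f₁ M (2 * Real.pi / ((w₂ : ℝ) * (M + 1))) t
          - SWE f₁ M (2 * Real.pi / ((w₁ : ℝ) * (M + 1))) t‖
        = Real.sqrt (∑ i : Fin M,
            |deriv f₁ (c i)| ^ 2 * ((((i : ℕ) : ℝ) + 1) / ((M : ℝ) + 1)) ^ 2
              * |2 * Real.pi / (w₁ : ℝ) - 2 * Real.pi / (w₂ : ℝ)| ^ 2) := by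
  have hpi := Real.pi_pos
  have hM1 : (0:ℝ) < (M:ℝ) + 1 := by positivity
  have hw₁R : (0:ℝ) < (w₁:ℝ) := by exact_mod_cast hw₁
  have hw₂R : (0:ℝ) < (w₂:ℝ) := by exact_mod_cast hw₁.trans hw
  have hwR : (w₁:ℝ) < (w₂:ℝ) := by exact_mod_cast hw
  set τ₁ := 2 * Real.pi / ((w₁ : ℝ) * (M + 1)) with hτ₁
  set τ₂ := 2 * Real.pi / ((w₂ : ℝ) * (M + 1)) with hτ₂
  have hττ : τ₂ < τ₁ := by
    apply div_lt_div_of_pos_left (by positivity) (by positivity)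
    exact mul_lt_mul_of_pos_right hwR hM1
  -- for each i : Fin M, apply MVT on [a i, b i]
  have key : ∀ i : Fin M, ∃ c ∈ Set.Ioo (t + ((i:ℕ)+1) * τ₂) (t + ((i:ℕ)+1) * τ₁),
      deriv f₁ c = (f₁ (t + ((i:ℕ)+1) * τ₁) - f₁ (t + ((i:ℕ)+1) * τ₂)) /
        ((t + ((i:ℕ)+1) * τ₁) - (t + ((i:ℕ)+1) * τ₂)) := by
    intro i
    have hk : (0:ℝ) < ((i:ℕ):ℝ) + 1 := by positivity
    have hab : t + ((i:ℕ)+1) * τ₂ < t + ((i:ℕ)+1) * τ₁ := by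
      have := mul_lt_mul_of_pos_left hττ hk
      linarith
    have ha : t + ((i:ℕ)+1) * τ₂ ∈ Set.Icc 0 (2 * Real.pi) := by
      have := ht₂ ⟨(i:ℕ)+1, by omega⟩
      simpa using this
    have hb : t + ((i:ℕ)+1) * τ₁ ∈ Set.Icc 0 (2 * Real.pi) := by
      have := ht₁ ⟨(i:ℕ)+1, by omega⟩
      simpa using this
    have hsub : Set.Icc (t + ((i:ℕ)+1) * τ₂) (t + ((i:ℕ)+1) * τ₁) ⊆ Set.Icc 0 (2*Real.pi) :=
      Set.Icc_subset_Icc ha.1 hb.2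
    have hsub' : Set.Ioo (t + ((i:ℕ)+1) * τ₂) (t + ((i:ℕ)+1) * τ₁) ⊆ Set.Ioo 0 (2*Real.pi) :=
      Set.Ioo_subset_Ioo ha.1 hb.2
    exact exists_deriv_eq_slope f₁ hab (hcont.mono hsub) (hdiff.mono hsub')
  choose c hc hderiv using key
  refine ⟨c, fun i => ?_, ?_⟩
  · have := hc i
    have e₂ : t + 2 * ((i:ℕ) + 1) * Real.pi / ((w₂ : ℝ) * (M + 1)) = t + ((i:ℕ)+1) * τ₂ := by
      rw [hτ₂]; ring
    have e₁ : t + 2 * ((i:ℕ) + 1) * Real.pi / ((w₁ : ℝ) * (M + 1)) = t + ((i:ℕ)+1) * τ₁ := by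
      rw [hτ₁]; ring
    rw [e₁, e₂]; exact this
  · rw [EuclideanSpace.norm_eq]
    congr 1
    rw [Fin.sum_univ_succ]
    have h0 : ‖(SWE f₁ M τ₂ t - SWE f₁ M τ₁ t) 0‖ ^ 2 = 0 := by
      simp [SWE]
    rw [h0, zero_add]
    apply Finset.sum_congr rfl
    intro i _
    have hk : (0:ℝ) < ((i:ℕ):ℝ) + 1 := by positivity
    have hab : t + ((i:ℕ)+1) * τ₂ < t + ((i:ℕ)+1) * τ₁ := by
      have := mul_lt_mul_of_pos_left hττ hk
      linarith
    have hd := hderiv i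
    have hne : ((t + ((i:ℕ)+1) * τ₁) - (t + ((i:ℕ)+1) * τ₂)) ≠ 0 := by linarith
    have hval : f₁ (t + ((i:ℕ)+1) * τ₁) - f₁ (t + ((i:ℕ)+1) * τ₂)
        = deriv f₁ (c i) * ((t + ((i:ℕ)+1) * τ₁) - (t + ((i:ℕ)+1) * τ₂)) := by
      rw [hd, div_mul_cancel₀ _ hne]
    have hdiffeq : (t + ((i:ℕ)+1) * τ₁) - (t + ((i:ℕ)+1) * τ₂)
        = (((i:ℕ):ℝ)+1) / ((M:ℝ)+1) * (2 * Real.pi / (w₁ : ℝ) - 2 * Real.pi / (w₂ : ℝ)) := by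
      rw [hτ₁, hτ₂]
      field_simp
      ring
    have hXpos : (0:ℝ) ≤ 2 * Real.pi / (w₁ : ℝ) - 2 * Real.pi / (w₂ : ℝ) := by
      have : 2 * Real.pi / (w₂ : ℝ) ≤ 2 * Real.pi / (w₁ : ℝ) :=
        div_le_div_of_nonneg_left (by positivity) hw₁R (le_of_lt hwR)
      linarith
    have hcoord : (SWE f₁ M τ₂ t - SWE f₁ M τ₁ t) i.succ
        = f₁ (t + ((i:ℕ)+1) * τ₂) - f₁ (t + ((i:ℕ)+1) * τ₁) := by
      simp [SWE]
    rw [hcoord, Real.norm_eq_abs]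
    have : f₁ (t + ((i:ℕ)+1) * τ₂) - f₁ (t + ((i:ℕ)+1) * τ₁)
        = - (deriv f₁ (c i) * ((((i:ℕ):ℝ)+1) / ((M:ℝ)+1)
            * (2 * Real.pi / (w₁ : ℝ) - 2 * Real.pi / (w₂ : ℝ)))) := by
      rw [← hdiffeq]; linarith [hval]
    rw [this, abs_neg, abs_mul, abs_mul, mul_pow, mul_pow]
    rw [abs_of_nonneg (by positivity : (0:ℝ) ≤ (((i:ℕ):ℝ)+1) / ((M:ℝ)+1))]
    ring
end

section
/- Let f₁ : ℝ → ℝ be continuous on [0,2π] and differentiable on (0,2π), let M ∈ ℕ with M ≥ 1, and let w₂₁, w₂₂ ∈ ℕ with w₂₁ < w₂₂. Set τ₁ = 2π/(w₂₁(M+1)) and τ₂ = 2π/(w₂₂(M+1)). Fix t such that all evaluation points t + (i−1)τ₁ and t + (i−1)τ₂ (i = 1,…,M+1) lie in [0,2π]. Then there exist points cᵢ ∈ (t + (i−1)τ₂, t + (i−1)τ₁) for i = 2,…,M+1 such that ‖SW_{M,τ₁}f₁(t) − SW_{M,τ₂}f₁(t)‖₂ ≤ √(M+1) · |2π/w₂₁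 − 2π/w₂₂| · ( Σ_{i=2}^{M+1} |f₁'(cᵢ)|² )^{1/2}. -/
theorem stmt_2 (f₁ : ℝ → ℝ) (M w₂₁ w₂₂ : ℕ) (hM : 1 ≤ M) (hw₂₁ : 0 < w₂₁) (hw : w₂₁ < w₂₂)
    (hcont : ContinuousOn f₁ (Set.Icc 0 (2 * Real.pi)))
    (hdiff : DifferentiableOn ℝ f₁ (Set.Ioo 0 (2 * Real.pi)))
    (t : ℝ)
    (ht₁ : ∀ i : Fin (M + 1),
      t + (i : ℕ) * (2 * Real.pi / ((w₂₁ : ℝ) * (M + 1))) ∈ Set.Icc 0 (2 * Real.pi))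
    (ht₂ : ∀ i : Fin (M + 1),
      t + (i : ℕ) * (2 * Real.pi / ((w₂₂ : ℝ) * (M + 1))) ∈ Set.Icc 0 (2 * Real.pi)) :
    ∃ c : Fin M → ℝ,
      (∀ i : Fin M,
        c i ∈ Set.Ioo (t + (((i : ℕ) : ℝ) + 1) * (2 * Real.pi / ((w₂₂ : ℝ) * (M + 1))))
          (t + (((i : ℕ) : ℝ) + 1) * (2 * Real.pi / ((w₂₁ : ℝ) * (M + 1))))) ∧
      ‖SWE f₁ M (2 * Real.pi / ((w₂₁ : ℝ) * (M + 1))) t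
          - SWE f₁ M (2 * Real.pi / ((w₂₂ : ℝ) * (M + 1))) t‖
        ≤ Real.sqrt ((M : ℝ) + 1) * |2 * Real.pi / (w₂₁ : ℝ) - 2 * Real.pi / (w₂₂ : ℝ)|
            * Real.sqrt (∑ i : Fin M, |deriv f₁ (c i)| ^ 2) := by
  have hpi : (0:ℝ) < Real.pi := Real.pi_pos
  set τ₁ : ℝ := 2 * Real.pi / ((w₂₁ : ℝ) * (M + 1)) with hτ₁def
  set τ₂ : ℝ := 2 * Real.pi / ((w₂₂ : ℝ) * (M + 1)) with hτ₂def
  have hw₂₂ : 0 < w₂₂ := lt_trans hw₂₁ hw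
  have hM1 : (0:ℝ) < (M:ℝ) + 1 := by positivity
  have hw1 : (0:ℝ) < (w₂₁:ℝ) := by exact_mod_cast hw₂₁
  have hw2 : (0:ℝ) < (w₂₂:ℝ) := by exact_mod_cast hw₂₂
  have hτ₁pos : 0 < τ₁ := by rw [hτ₁def]; positivity
  have hτ₂pos : 0 < τ₂ := by rw [hτ₂def]; positivity
  have hτlt : τ₂ < τ₁ := by
    rw [hτ₁def, hτ₂def]
    apply div_lt_div_of_pos_left (by positivity) (by positivity)
    apply mul_lt_mul_of_pos_right _ hM1
    exact_mod_cast hw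
  -- points
  have key : ∀ i : Fin M, ∃ c ∈ Set.Ioo (t + (((i:ℕ):ℝ) + 1) * τ₂) (t + (((i:ℕ):ℝ) + 1) * τ₁),
      deriv f₁ c = (f₁ (t + (((i:ℕ):ℝ) + 1) * τ₁) - f₁ (t + (((i:ℕ):ℝ) + 1) * τ₂))
        / ((t + (((i:ℕ):ℝ) + 1) * τ₁) - (t + (((i:ℕ):ℝ) + 1) * τ₂)) := by
    intro i
    set a := t + (((i:ℕ):ℝ) + 1) * τ₂
    set b := t + (((i:ℕ):ℝ) + 1) * τ₁
    have hab : a < b := by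
      have : (((i:ℕ):ℝ) + 1) * τ₂ < (((i:ℕ):ℝ) + 1) * τ₁ :=
        mul_lt_mul_of_pos_left hτlt (by positivity)
      simpa [a, b] using this
    have ha : a ∈ Set.Icc 0 (2 * Real.pi) := by
      have := ht₂ ⟨(i:ℕ) + 1, by omega⟩
      simpa [a, Fin.val_mk] using this
    have hb : b ∈ Set.Icc 0 (2 * Real.pi) := by
      have := ht₁ ⟨(i:ℕ) + 1, by omega⟩
      simpa [b, Fin.val_mk] using this
    have hsub : Set.Icc a b ⊆ Set.Icc 0 (2 * Real.pi) :=
      Set.Icc_subset_Icc ha.1 hb.2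
    have hsub' : Set.Ioo a b ⊆ Set.Ioo 0 (2 * Real.pi) :=
      Set.Ioo_subset_Ioo ha.1 hb.2
    exact exists_deriv_eq_slope f₁ hab (hcont.mono hsub)
      (fun x hx => ((hdiff x (hsub' hx)).differentiableAt
        (isOpen_Ioo.mem_nhds (hsub' hx))).differentiableWithinAt)
  choose c hc hslope using key
  refine ⟨c, hc, ?_⟩
  set D : ℝ := 2 * Real.pi / (w₂₁ : ℝ) - 2 * Real.pi / (w₂₂ : ℝ) with hDdef
  have hDpos : 0 < D := by
    rw [hDdef]
    apply sub_pos.2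
    apply div_lt_div_of_pos_left (by positivity) hw1
    exact_mod_cast hw
  set v := SWE f₁ M τ₁ t - SWE f₁ M τ₂ t with hv
  have hvj : ∀ j : Fin (M+1), v j = f₁ (t + (j:ℕ) * τ₁) - f₁ (t + (j:ℕ) * τ₂) := by
    intro j; simp [hv, SWE]
  have hv0 : v 0 = 0 := by simp [hvj 0]
  -- component bound
  have hcomp : ∀ i : Fin M, ‖v i.succ‖ ^ 2 ≤ D ^ 2 * |deriv f₁ (c i)| ^ 2 := by
    intro i
    have hbma : (t + (((i:ℕ):ℝ) + 1) * τ₁) - (t + (((i:ℕ):ℝ) + 1) * τ₂)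
        = (((i:ℕ):ℝ) + 1) * (τ₁ - τ₂) := by ring
    have hne : (((i:ℕ):ℝ) + 1) * (τ₁ - τ₂) ≠ 0 := by
      have := sub_pos.2 hτlt; positivity
    have hval : v i.succ = deriv f₁ (c i) * ((((i:ℕ):ℝ) + 1) * (τ₁ - τ₂)) := by
      rw [hvj i.succ]
      have hcast : ((i.succ : ℕ) : ℝ) = ((i:ℕ):ℝ) + 1 := by push_cast [Fin.val_succ]; ring
      rw [hcast, hslope i, hbma, div_mul_cancel₀ _ hne]
    have hle : (((i:ℕ):ℝ) + 1) * (τ₁ - τ₂) ≤ D := by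
      have h1 : (((i:ℕ):ℝ) + 1) ≤ (M:ℝ) + 1 := by
        have h := i.isLt
        have h' : ((i:ℕ):ℝ) ≤ (M:ℝ) := by exact_mod_cast Nat.le_of_lt h
        linarith
      have h2 : (((i:ℕ):ℝ) + 1) * (τ₁ - τ₂) ≤ ((M:ℝ) + 1) * (τ₁ - τ₂) :=
        mul_le_mul_of_nonneg_right h1 (le_of_lt (sub_pos.2 hτlt))
      have h3 : ((M:ℝ) + 1) * (τ₁ - τ₂) = D := by
        rw [hτ₁def, hτ₂def, hDdef]
        field_simp
      linarith
    have habs : |v i.succ| ≤ D * |deriv f₁ (c i)| := by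
      rw [hval, abs_mul, mul_comm]
      apply mul_le_mul_of_nonneg_right _ (abs_nonneg _)
      calc |(((i:ℕ):ℝ) + 1) * (τ₁ - τ₂)| = (((i:ℕ):ℝ) + 1) * (τ₁ - τ₂) :=
            abs_of_nonneg (by have := sub_pos.2 hτlt; positivity)
        _ ≤ D := hle
    have : ‖v i.succ‖ = |v i.succ| := rfl
    rw [this]
    calc |v i.succ| ^ 2 ≤ (D * |deriv f₁ (c i)|) ^ 2 :=
          pow_le_pow_left₀ (abs_nonneg _) habs 2
      _ = D ^ 2 * |deriv f₁ (c i)| ^ 2 := by ring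
  have hnorm : ‖v‖ = Real.sqrt (∑ j : Fin (M+1), ‖v j‖ ^ 2) :=
    EuclideanSpace.norm_eq v
  have hsum : ∑ j : Fin (M+1), ‖v j‖ ^ 2 ≤ D ^ 2 * ∑ i : Fin M, |deriv f₁ (c i)| ^ 2 := by
    rw [Fin.sum_univ_succ, hv0]
    simp only [norm_zero, zero_pow, ne_eq, OfNat.ofNat_ne_zero, not_false_eq_true, zero_add]
    rw [Finset.mul_sum]
    exact Finset.sum_le_sum fun i _ => hcomp i
  have step1 : ‖v‖ ≤ D * Real.sqrt (∑ i : Fin M, |deriv f₁ (c i)| ^ 2) := by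
    rw [hnorm]
    calc Real.sqrt (∑ j : Fin (M+1), ‖v j‖ ^ 2)
        ≤ Real.sqrt (D ^ 2 * ∑ i : Fin M, |deriv f₁ (c i)| ^ 2) := Real.sqrt_le_sqrt hsum
      _ = D * Real.sqrt (∑ i : Fin M, |deriv f₁ (c i)| ^ 2) := by
          rw [Real.sqrt_mul (by positivity), Real.sqrt_sq hDpos.le]
  have hDabs : |D| = D := abs_of_pos hDpos
  have hM1sqrt : 1 ≤ Real.sqrt ((M:ℝ) + 1) := by
    have h := Real.sqrt_le_sqrt (show (1:ℝ) ≤ (M:ℝ) + 1 by linarith)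
    simpa using h
  calc ‖v‖ ≤ D * Real.sqrt (∑ i : Fin M, |deriv f₁ (c i)| ^ 2) := step1
    _ = 1 * (D * Real.sqrt (∑ i : Fin M, |deriv f₁ (c i)| ^ 2)) := by ring
    _ ≤ Real.sqrt ((M:ℝ) + 1) * (D * Real.sqrt (∑ i : Fin M, |deriv f₁ (c i)| ^ 2)) := by
        apply mul_le_mul_of_nonneg_right hM1sqrt (by positivity)
    _ = Real.sqrt ((M:ℝ) + 1) * |D| * Real.sqrt (∑ i : Fin M, |deriv f₁ (c i)| ^ 2) := by
        rw [hDabs]; ring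
end

section
/- Let x₁, …, x_N ∈ ℝⁿ, and let S = Σ_{i=1}^N xᵢ xᵢᵀ be the associated n×n positive semidefinite symmetric matrix, with eigenvalues λ₁ ≥ λ₂ ≥ … ≥ λₙ ≥ 0. Let K < n, and let P : ℝⁿ → ℝⁿ be the orthogonal projection onto the span of orthonormal eigenvectors of S corresponding to the eigenvalues λ₁, …, λ_K. Define yᵢ = P xᵢ for each i. Then for all i, j ∈ {1,…,N}: 0 ≤ ‖xᵢ − xⱼ‖² − ‖yᵢ − yⱼ‖² ≤ 2 λ_{K+1} ≤ 2 √( Σ_{k=K+1}^{n} λ_k² ). -/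
open scoped RealInnerProductSpace

theorem stmt_6 (n N K : ℕ) (hK : K < n)
    (x : Fin N → EuclideanSpace ℝ (Fin n))
    (lam : Fin n → ℝ)
    (hord : ∀ k l : Fin n, k ≤ l → lam l ≤ lam k)
    (hnonneg : ∀ k, 0 ≤ lam k)
    (v : Fin n → EuclideanSpace ℝ (Fin n))
    (hortho : Orthonormal ℝ v)
    (heig : ∀ k : Fin n, (∑ i, ⟪x i, v k⟫ • x i) = lam k • v k)
    (y : Fin N → EuclideanSpace ℝ (Fin n))
    (hy : ∀ i, y i =
      ∑ k ∈ Finset.univ.filter (fun k : Fin n => (k : ℕ) < K), ⟪v k, x i⟫ • v k) :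
    ∀ i j : Fin N,
      0 ≤ ‖x i - x j‖ ^ 2 - ‖y i - y j‖ ^ 2 ∧
      ‖x i - x j‖ ^ 2 - ‖y i - y j‖ ^ 2 ≤ 2 * lam ⟨K, hK⟩ ∧
      2 * lam ⟨K, hK⟩ ≤
        2 * Real.sqrt (∑ k ∈ Finset.univ.filter (fun k : Fin n => K ≤ (k : ℕ)),
          lam k ^ 2) := by
  intro i j
  classical
  have hn : 0 < n := lt_of_le_of_lt (Nat.zero_le K) hK
  haveI : Nonempty (Fin n) := ⟨⟨0, hn⟩⟩
  set d : EuclideanSpace ℝ (Fin n) := x i - x j with hd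
  set c : Fin n → ℝ := fun k => ⟪v k, d⟫ with hc
  set F : Finset (Fin n) := Finset.univ.filter (fun k : Fin n => K ≤ (k : ℕ)) with hF
  set F' : Finset (Fin n) := Finset.univ.filter (fun k : Fin n => (k : ℕ) < K) with hF'
  -- orthonormal basis
  let b : Module.Basis (Fin n) ℝ (EuclideanSpace ℝ (Fin n)) :=
    basisOfLinearIndependentOfCardEqFinrank hortho.linearIndependent (by simp)
  have hb : ⇑b = v := coe_basisOfLinearIndependentOfCardEqFinrank _ _
  let ob : OrthonormalBasis (Fin n) ℝ (EuclideanSpace ℝ (Fin n)) :=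
    b.toOrthonormalBasis (by rwa [hb])
  have hob : ⇑ob = v := by rw [show ⇑ob = ⇑b from b.coe_toOrthonormalBasis _, hb]
  have hdsum : (∑ k, c k • v k) = d := by
    have := ob.sum_repr' d
    simpa [hob, hc] using this
  have hnd : ‖d‖ ^ 2 = ∑ k, c k ^ 2 := by
    rw [← real_inner_self_eq_norm_sq, ← hdsum, hortho.inner_sum]
    simp [sq]
  have hysub : y i - y j = ∑ k ∈ F', c k • v k := by
    rw [hy i, hy j, ← Finset.sum_sub_distrib]
    refine Finset.sum_congr rfl fun k _ => ?_
    rw [← sub_smul, ← inner_sub_right]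
  have hny : ‖y i - y j‖ ^ 2 = ∑ k ∈ F', c k ^ 2 := by
    rw [hysub, ← real_inner_self_eq_norm_sq, hortho.inner_sum]
    simp [sq]
  have hsplit : (∑ k, c k ^ 2) = (∑ k ∈ F', c k ^ 2) + ∑ k ∈ F, c k ^ 2 := by
    rw [← Finset.sum_filter_add_sum_filter_not Finset.univ (fun k : Fin n => (k : ℕ) < K)]
    have : Finset.filter (fun k : Fin n => ¬(k : ℕ) < K) Finset.univ = F := by
      ext k; simp [hF, not_lt]
    rw [this]
  set t : ℝ := ∑ k ∈ F, c k ^ 2 with ht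
  have hdiff : ‖d‖ ^ 2 - ‖y i - y j‖ ^ 2 = t := by
    rw [hnd, hny, hsplit]; ring
  have ht0 : 0 ≤ t := Finset.sum_nonneg fun k _ => sq_nonneg _
  -- the projection of d onto the discarded eigendirections
  set u : EuclideanSpace ℝ (Fin n) := ∑ k ∈ F, c k • v k with hu
  set a : Fin N → ℝ := fun m => ⟪x m, u⟫ with ha
  have ha' : ∀ m, a m = ∑ k ∈ F, c k * ⟪x m, v k⟫ := by
    intro m
    show ⟪x m, ∑ k ∈ F, c k • v k⟫ = _
    rw [inner_sum]
    exact Finset.sum_congr rfl fun k _ => real_inner_smul_right _ _ _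
  have hSu : (∑ m, a m • x m) = ∑ k ∈ F, (c k * lam k) • v k := by
    calc (∑ m, a m • x m) = ∑ m, ∑ k ∈ F, (c k * ⟪x m, v k⟫) • x m := by
          refine Finset.sum_congr rfl fun m _ => ?_
          rw [ha' m, Finset.sum_smul]
      _ = ∑ k ∈ F, c k • ∑ m, ⟪x m, v k⟫ • x m := by
          rw [Finset.sum_comm]
          refine Finset.sum_congr rfl fun k _ => ?_
          rw [Finset.smul_sum]
          refine Finset.sum_congr rfl fun m _ => ?_
          rw [smul_smul]
      _ = ∑ k ∈ F, (c k * lam k) • v k := by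
          refine Finset.sum_congr rfl fun k _ => ?_
          rw [heig k, smul_smul]
  have hsumsq : (∑ m, a m ^ 2) = ∑ k ∈ F, lam k * c k ^ 2 := by
    have h1 : (∑ m, a m ^ 2) = ⟪∑ m, a m • x m, u⟫ := by
      rw [sum_inner]
      refine Finset.sum_congr rfl fun m _ => ?_
      rw [real_inner_smul_left, sq, ha]
    rw [h1, hSu, hortho.inner_sum]
    refine Finset.sum_congr rfl fun k _ => ?_
    simp [sq]; ring
  have hdu : ⟪d, u⟫ = t := by
    rw [hu, inner_sum]
    refine Finset.sum_congr rfl fun k _ => ?_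
    rw [real_inner_smul_right, sq, hc]
    rw [real_inner_comm]
  have hquad : (∑ k ∈ F, lam k * c k ^ 2) ≤ lam ⟨K, hK⟩ * t := by
    rw [ht, Finset.mul_sum]
    refine Finset.sum_le_sum fun k hk => ?_
    have hk' : K ≤ (k : ℕ) := by simpa [hF] using hk
    have : lam k ≤ lam ⟨K, hK⟩ := hord ⟨K, hK⟩ k (by simpa [Fin.le_def] using hk')
    exact mul_le_mul_of_nonneg_right this (sq_nonneg _)
  have hkey : t ^ 2 ≤ 2 * (lam ⟨K, hK⟩ * t) := by
    have hdu2 : ⟪d, u⟫ = a i - a j := by rw [hd, inner_sub_left]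
    have habs : (a i - a j) ^ 2 ≤ 2 * ∑ m, a m ^ 2 := by
      by_cases hij : i = j
      · subst hij
        simpa using mul_nonneg (by norm_num : (0:ℝ) ≤ 2)
          (Finset.sum_nonneg fun m _ => sq_nonneg (a m))
      · have hsub : a i ^ 2 + a j ^ 2 ≤ ∑ m, a m ^ 2 := by
          have := Finset.sum_le_sum_of_subset_of_nonneg
            (Finset.subset_univ ({i, j} : Finset (Fin N)))
            (fun m _ _ => sq_nonneg (a m))
          rwa [Finset.sum_insert (by simpa using hij), Finset.sum_singleton] at this
        nlinarith [sq_nonneg (a i + a j)]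
    calc t ^ 2 = (a i - a j) ^ 2 := by rw [← hdu2, hdu]
      _ ≤ 2 * ∑ m, a m ^ 2 := habs
      _ = 2 * ∑ k ∈ F, lam k * c k ^ 2 := by rw [hsumsq]
      _ ≤ 2 * (lam ⟨K, hK⟩ * t) := by linarith [hquad]
  have hmain : t ≤ 2 * lam ⟨K, hK⟩ := by
    rcases eq_or_lt_of_le ht0 with h | h
    · rw [← h]; exact mul_nonneg (by norm_num) (hnonneg _)
    · have h2 : t * t ≤ 2 * lam ⟨K, hK⟩ * t := by
        calc t * t = t ^ 2 := (pow_two t).symm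
          _ ≤ 2 * (lam ⟨K, hK⟩ * t) := hkey
          _ = 2 * lam ⟨K, hK⟩ * t := by ring
      exact le_of_mul_le_mul_right h2 h
  refine ⟨by rw [hdiff]; exact ht0, by rw [hdiff]; exact hmain, ?_⟩
  have hmem : (⟨K, hK⟩ : Fin n) ∈ F := by simp [hF]
  have hsq : lam ⟨K, hK⟩ ^ 2 ≤ ∑ k ∈ F, lam k ^ 2 :=
    Finset.single_le_sum (fun k _ => sq_nonneg (lam k)) hmem
  have : lam ⟨K, hK⟩ ≤ Real.sqrt (∑ k ∈ F, lam k ^ 2) := by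
    calc lam ⟨K, hK⟩ = Real.sqrt (lam ⟨K, hK⟩ ^ 2) := (Real.sqrt_sq (hnonneg _)).symm
      _ ≤ _ := Real.sqrt_le_sqrt hsq
  linarith
end

section
/- Let x₁, …, x_N ∈ ℝⁿ, let S = Σ_{i=1}^N xᵢ xᵢᵀ with eigenvalues λ₁ ≥ … ≥ λₙ ≥ 0, let K < n, let P be the orthogonal projection onto the span of orthonormal eigenvectors of S corresponding to λ₁, …, λ_K, and set yᵢ = P xᵢ. Then for all i, j ∈ {1,…,N}: | ‖xᵢ − xⱼ‖ − ‖yᵢ − yⱼ‖ | ≤ √2 · ( Σ_{k=K+1}^{n} λ_k² )^{1/4}. -/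
open scoped RealInnerProductSpace

theorem stmt_7 (n N K : ℕ) (hK : K < n)
    (x : Fin N → EuclideanSpace ℝ (Fin n))
    (lam : Fin n → ℝ)
    (hord : ∀ k l : Fin n, k ≤ l → lam l ≤ lam k)
    (hnonneg : ∀ k, 0 ≤ lam k)
    (v : Fin n → EuclideanSpace ℝ (Fin n))
    (hortho : Orthonormal ℝ v)
    (heig : ∀ k : Fin n, (∑ i, ⟪x i, v k⟫ • x i) = lam k • v k)
    (y : Fin N → EuclideanSpace ℝ (Fin n))
    (hy : ∀ i, y i =
      ∑ k ∈ Finset.univ.filter (fun k : Fin n => (k : ℕ) < K), ⟪v k, x i⟫ • v k) :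
    ∀ i j : Fin N,
      |‖x i - x j‖ - ‖y i - y j‖| ≤
        Real.sqrt 2 * Real.sqrt (Real.sqrt
          (∑ k ∈ Finset.univ.filter (fun k : Fin n => K ≤ (k : ℕ)), lam k ^ 2)) := by
  intro i j
  classical
  by_cases hij : i = j
  · subst hij
    simp only [sub_self, norm_zero, abs_zero]
    positivity
  have hne : Nonempty (Fin n) := ⟨⟨K, hK⟩⟩
  set T : Finset (Fin n) := Finset.univ.filter (fun k : Fin n => K ≤ (k : ℕ)) with hT
  set Tc : Finset (Fin n) := Finset.univ.filter (fun k : Fin n => (k : ℕ) < K) with hTc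
  -- orthonormal basis
  have card_eq : Fintype.card (Fin n) = Module.finrank ℝ (EuclideanSpace ℝ (Fin n)) := by simp
  set b0 := basisOfOrthonormalOfCardEqFinrank hortho card_eq with hb0def
  have hb0 : ⇑b0 = v := coe_basisOfOrthonormalOfCardEqFinrank hortho card_eq
  set b := b0.toOrthonormalBasis (by rw [hb0]; exact hortho) with hbdef
  have hb : ⇑b = v := by rw [hbdef, Module.Basis.coe_toOrthonormalBasis, hb0]
  have hexp : ∀ w : EuclideanSpace ℝ (Fin n), ∑ k, ⟪v k, w⟫ • v k = w := by
    intro w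
    have := b.sum_repr' w
    rwa [hb] at this
  have hvkl : ∀ k l : Fin n, ⟪v k, v l⟫ = if k = l then (1 : ℝ) else 0 :=
    orthonormal_iff_ite.mp hortho
  -- coefficients of the difference
  set c : Fin n → ℝ := fun k => ⟪v k, x i⟫ - ⟪v k, x j⟫ with hc
  have hcd : ∀ k, ⟪v k, x i - x j⟫ = c k := by
    intro k; rw [inner_sub_right]
  -- Parseval for the difference
  have hA2 : ‖x i - x j‖ ^ 2 = ∑ k, c k ^ 2 := by
    have h1 : ⟪x i - x j, x i - x j⟫ = ∑ k, c k * c k := by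
      conv_lhs => rw [← hexp (x i - x j)]
      simp_rw [hcd]
      rw [hortho.inner_sum]
      simp
    rw [← real_inner_self_eq_norm_sq, h1]
    simp [sq]
  -- norm of y i - y j
  have hB2 : ‖y i - y j‖ ^ 2 = ∑ k ∈ Tc, c k ^ 2 := by
    have hyd : y i - y j = ∑ k ∈ Tc, c k • v k := by
      rw [hy i, hy j, ← Finset.sum_sub_distrib]
      exact Finset.sum_congr rfl fun k _ => by rw [← sub_smul]
    have h1 : ⟪y i - y j, y i - y j⟫ = ∑ k ∈ Tc, c k * c k := by
      rw [hyd, hortho.inner_sum]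
      simp
    rw [← real_inner_self_eq_norm_sq, h1]
    simp [sq]
  set u : ℝ := ∑ k ∈ T, c k ^ 2 with hu
  have hu0 : 0 ≤ u := Finset.sum_nonneg fun k _ => sq_nonneg _
  have hsplit : ‖x i - x j‖ ^ 2 = ‖y i - y j‖ ^ 2 + u := by
    rw [hA2, hB2, hu]
    have hTT : T = Finset.univ.filter (fun k : Fin n => ¬ ((k : ℕ) < K)) := by
      simp [hT, not_lt]
    rw [hTT, hTc]
    exact (Finset.sum_filter_add_sum_filter_not Finset.univ _ _).symm
  -- eigen relation in coefficients
  have hDe : ∀ k l : Fin n, (∑ i', ⟪v k, x i'⟫ * ⟪v l, x i'⟫) = if k = l then lam k else 0 := by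
    intro k l
    have h := congrArg (fun w : EuclideanSpace ℝ (Fin n) => ⟪w, v l⟫) (heig k)
    simp only [sum_inner, real_inner_smul_left] at h
    rw [hvkl k l] at h
    calc ∑ i', ⟪v k, x i'⟫ * ⟪v l, x i'⟫ = ∑ i', ⟪x i', v k⟫ * ⟪x i', v l⟫ := by
          refine Finset.sum_congr rfl fun i' _ => ?_
          rw [real_inner_comm (v k) (x i'), real_inner_comm (v l) (x i')]
      _ = lam k * (if k = l then 1 else 0) := h
      _ = if k = l then lam k else 0 := by split <;> simp
  -- the auxiliary quantity t
  set t : Fin N → ℝ := fun i' => ∑ k ∈ T, c k * ⟪v k, x i'⟫ with ht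
  have hst : ∑ i', t i' ^ 2 = ∑ k ∈ T, lam k * c k ^ 2 := by
    calc ∑ i', t i' ^ 2
        = ∑ i', ∑ k ∈ T, ∑ l ∈ T, (c k * c l) * (⟪v k, x i'⟫ * ⟪v l, x i'⟫) := by
          refine Finset.sum_congr rfl fun i' _ => ?_
          rw [sq, ht, Finset.sum_mul_sum]
          exact Finset.sum_congr rfl fun k _ => Finset.sum_congr rfl fun l _ => by ring
      _ = ∑ k ∈ T, ∑ l ∈ T, ∑ i', (c k * c l) * (⟪v k, x i'⟫ * ⟪v l, x i'⟫) := by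
          rw [Finset.sum_comm]
          exact Finset.sum_congr rfl fun k _ => Finset.sum_comm
      _ = ∑ k ∈ T, ∑ l ∈ T, (c k * c l) * (if k = l then lam k else 0) := by
          refine Finset.sum_congr rfl fun k _ => Finset.sum_congr rfl fun l _ => ?_
          rw [← Finset.mul_sum, hDe k l]
      _ = ∑ k ∈ T, lam k * c k ^ 2 := by
          refine Finset.sum_congr rfl fun k hk => ?_
          rw [Finset.sum_eq_single k
            (fun l _ hlk => by rw [if_neg (Ne.symm hlk), mul_zero])
            (fun h => absurd hk h)]
          rw [if_pos rfl]; ring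
  have hut : u = t i - t j := by
    rw [hu, ht]
    simp only
    rw [← Finset.sum_sub_distrib]
    exact Finset.sum_congr rfl fun k _ => by rw [hc]; ring
  have hts : t i ^ 2 + t j ^ 2 ≤ ∑ i', t i' ^ 2 := by
    have h1 : ∑ i' ∈ ({i, j} : Finset (Fin N)), t i' ^ 2 = t i ^ 2 + t j ^ 2 :=
      Finset.sum_pair hij
    rw [← h1]
    exact Finset.sum_le_sum_of_subset_of_nonneg (Finset.subset_univ _)
      (fun k _ _ => sq_nonneg _)
  set L : ℝ := Real.sqrt (∑ k ∈ T, lam k ^ 2) with hL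
  have hL0 : 0 ≤ L := Real.sqrt_nonneg _
  have hcs : ∑ k ∈ T, lam k * c k ^ 2 ≤ L * u := by
    have h1 : (∑ k ∈ T, lam k * c k ^ 2) ^ 2 ≤ (∑ k ∈ T, lam k ^ 2) * ∑ k ∈ T, (c k ^ 2) ^ 2 :=
      Finset.sum_mul_sq_le_sq_mul_sq T lam (fun k => c k ^ 2)
    have h2 : ∑ k ∈ T, (c k ^ 2) ^ 2 ≤ u ^ 2 :=
      Finset.sum_sq_le_sq_sum_of_nonneg fun k _ => sq_nonneg _
    have h3 : (∑ k ∈ T, lam k * c k ^ 2) ^ 2 ≤ (∑ k ∈ T, lam k ^ 2) * u ^ 2 :=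
      h1.trans (by
        have := Finset.sum_nonneg (fun k (_ : k ∈ T) => sq_nonneg (lam k))
        exact mul_le_mul_of_nonneg_left h2 this)
    have h4 : 0 ≤ ∑ k ∈ T, lam k * c k ^ 2 :=
      Finset.sum_nonneg fun k _ => mul_nonneg (hnonneg k) (sq_nonneg _)
    calc ∑ k ∈ T, lam k * c k ^ 2
        = Real.sqrt ((∑ k ∈ T, lam k * c k ^ 2) ^ 2) := by rw [Real.sqrt_sq h4]
      _ ≤ Real.sqrt ((∑ k ∈ T, lam k ^ 2) * u ^ 2) := Real.sqrt_le_sqrt h3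
      _ = L * u := by
          rw [Real.sqrt_mul (Finset.sum_nonneg fun k _ => sq_nonneg (lam k)), Real.sqrt_sq hu0,
            hL]
  have key : ∀ a b : ℝ, (a - b) ^ 2 ≤ 2 * (a ^ 2 + b ^ 2) := by
    intro a b; nlinarith [sq_nonneg (a + b)]
  have hu2L : u ≤ 2 * L := by
    have hu2 : u ^ 2 ≤ 2 * (L * u) := by
      have h1 : u ^ 2 ≤ 2 * (t i ^ 2 + t j ^ 2) := by
        rw [hut]; exact key _ _
      have h2 : u ^ 2 ≤ 2 * ∑ i', t i' ^ 2 := h1.trans (by linarith)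
      rw [hst] at h2
      linarith
    rcases eq_or_lt_of_le hu0 with h | h
    · rw [← h]; positivity
    · refine le_of_mul_le_mul_right ?_ h
      calc u * u = u ^ 2 := (sq u).symm
        _ ≤ 2 * (L * u) := hu2
        _ = 2 * L * u := by ring
  -- conclude
  set A := ‖x i - x j‖ with hA
  set B := ‖y i - y j‖ with hB
  have hA0 : 0 ≤ A := norm_nonneg _
  have hB0 : 0 ≤ B := norm_nonneg _
  have hBA : B ≤ A := by
    have h1 : B ^ 2 ≤ A ^ 2 := by rw [hsplit]; linarith
    calc B = Real.sqrt (B ^ 2) := (Real.sqrt_sq hB0).symm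
      _ ≤ Real.sqrt (A ^ 2) := Real.sqrt_le_sqrt h1
      _ = A := Real.sqrt_sq hA0
  have habs : |A - B| = A - B := abs_of_nonneg (by linarith)
  have hsq : (A - B) ^ 2 ≤ u := by
    have h0 : (0:ℝ) ≤ A - B := by linarith
    have h1 : A - B ≤ A + B := by linarith
    have h2 : (A - B) * (A + B) = A ^ 2 - B ^ 2 := by ring
    have h3 : (A - B) ^ 2 ≤ (A - B) * (A + B) := by
      rw [sq]; exact mul_le_mul_of_nonneg_left h1 h0
    rw [h2] at h3
    linarith [hsplit]
  have h5 : A - B ≤ Real.sqrt u := by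
    have := Real.sqrt_le_sqrt hsq
    rwa [Real.sqrt_sq (by linarith : (0:ℝ) ≤ A - B)] at this
  have h6 : Real.sqrt u ≤ Real.sqrt 2 * Real.sqrt L := by
    have := Real.sqrt_le_sqrt hu2L
    rwa [Real.sqrt_mul (by norm_num : (0:ℝ) ≤ 2)] at this
  rw [habs]
  exact h5.trans h6
end

section
/- Let x₁, …, x_N ∈ ℝⁿ, let S = Σ_{i=1}^N xᵢ xᵢᵀ with eigenvalues λ₁ ≥ … ≥ λₙ ≥ 0, let K < n, let P be the orthogonal projection onto the span of orthonormal eigenvectors of S corresponding to λ₁, …, λ_K, and set yᵢ = P xᵢ. Regard X = {x₁,…,x_N} and Y = {y₁,…,y_N} as compact metric spaces with the Euclidean metrics induced from ℝⁿ. Then the Gromov–Hausdorff distance between X and Y satisfies d_GH(X, Y) ≤ (√2/2) · ( Σ_{k=K+1}^{n} λ_k² )^{1/4}. -/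
open scoped RealInnerProductSpace

lemma real_tail (a c W T2 e : ℝ) (ha0 : 0 ≤ a) (hc0 : 0 ≤ c) (hW0 : 0 ≤ W)
    (hPyth : a ^ 2 = c ^ 2 + W ^ 2) (hw2 : W ^ 2 ≤ 2 * T2) (he0 : 0 ≤ e)
    (he2 : e ^ 2 = 2 * T2) : |a - c| ≤ e := by
  have hca : c ≤ a := by nlinarith
  rw [abs_of_nonneg (by linarith)]
  have hsq : (a - c) ^ 2 ≤ W ^ 2 := by nlinarith
  nlinarith

lemma key_dist {n N K : ℕ} (hK : K < n)
    (x : Fin N → EuclideanSpace ℝ (Fin n)) (lam : Fin n → ℝ)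
    (hnonneg : ∀ k, 0 ≤ lam k)
    (v : Fin n → EuclideanSpace ℝ (Fin n)) (hortho : Orthonormal ℝ v)
    (heig : ∀ k : Fin n, (∑ i, ⟪x i, v k⟫ • x i) = lam k • v k)
    (y : Fin N → EuclideanSpace ℝ (Fin n))
    (hy : ∀ i, y i =
      ∑ k ∈ Finset.univ.filter (fun k : Fin n => (k : ℕ) < K), ⟪v k, x i⟫ • v k)
    (i j : Fin N) :
    |dist (x i) (x j) - dist (y i) (y j)| ≤
      Real.sqrt 2 * Real.sqrt (Real.sqrt
        (∑ k ∈ Finset.univ.filter (fun k : Fin n => K ≤ (k : ℕ)), lam k ^ 2)) := by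
  set T : ℝ := ∑ k ∈ Finset.univ.filter (fun k : Fin n => K ≤ (k : ℕ)), lam k ^ 2 with hT
  have hT0 : 0 ≤ T := Finset.sum_nonneg fun k _ => sq_nonneg _
  have hε0 : (0:ℝ) ≤ Real.sqrt 2 * Real.sqrt (Real.sqrt T) := by positivity
  rcases eq_or_ne i j with hij | hij
  · subst hij; simpa using hε0
  -- basis
  haveI : Nonempty (Fin n) := ⟨⟨0, Nat.lt_of_le_of_lt (Nat.zero_le K) hK⟩⟩
  have card_eq : Fintype.card (Fin n) = Module.finrank ℝ (EuclideanSpace ℝ (Fin n)) := by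
    simp [finrank_euclideanSpace]
  let b0 : Module.Basis (Fin n) ℝ (EuclideanSpace ℝ (Fin n)) :=
    basisOfOrthonormalOfCardEqFinrank hortho card_eq
  have hb0 : ⇑b0 = v := coe_basisOfOrthonormalOfCardEqFinrank hortho card_eq
  let b : OrthonormalBasis (Fin n) ℝ (EuclideanSpace ℝ (Fin n)) :=
    b0.toOrthonormalBasis (by rwa [hb0])
  have hb : ⇑b = v := by rw [Module.Basis.coe_toOrthonormalBasis, hb0]
  have h_expand : ∀ z : EuclideanSpace ℝ (Fin n), z = ∑ k, ⟪v k, z⟫ • v k := by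
    intro z
    have := b.sum_repr' z
    rw [hb] at this
    exact this.symm
  have hparseval : ∀ z : EuclideanSpace ℝ (Fin n), ∑ k, ⟪v k, z⟫ ^ 2 = ‖z‖ ^ 2 := by
    intro z
    have h := b.sum_inner_mul_inner z z
    rw [hb] at h
    rw [← real_inner_self_eq_norm_sq, ← h]
    exact Finset.sum_congr rfl fun k _ => by rw [sq, real_inner_comm]
  set w : EuclideanSpace ℝ (Fin n) := (x i - x j) - (y i - y j) with hw
  have hvv := orthonormal_iff_ite.mp hortho
  have h_inner_y : ∀ (k : Fin n), (k : ℕ) < K → ∀ l, ⟪v k, y l⟫ = ⟪v k, x l⟫ := by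
    intro k hk l
    rw [hy l, inner_sum]
    simp only [real_inner_smul_right, hvv, mul_ite, mul_one, mul_zero, Finset.sum_ite_eq,
      Finset.mem_filter, Finset.mem_univ, true_and]
    rw [if_pos hk]
  have hd0 : ∀ k : Fin n, (k : ℕ) < K → ⟪v k, w⟫ = 0 := by
    intro k hk
    rw [hw]
    simp only [inner_sub_right]
    rw [h_inner_y k hk i, h_inner_y k hk j]
    ring
  have h_orth : ⟪w, y i - y j⟫ = 0 := by
    have hyij : y i - y j =
        ∑ m ∈ Finset.univ.filter (fun m : Fin n => (m : ℕ) < K),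
          (⟪v m, x i⟫ - ⟪v m, x j⟫) • v m := by
      rw [hy i, hy j, ← Finset.sum_sub_distrib]
      exact Finset.sum_congr rfl fun m _ => by rw [sub_smul]
    rw [hyij, inner_sum]
    refine Finset.sum_eq_zero fun m hm => ?_
    rw [real_inner_smul_right, real_inner_comm (v m) w,
      hd0 m (Finset.mem_filter.mp hm).2, mul_zero]
  have hxy : x i - x j = (y i - y j) + w := by rw [hw]; abel
  have hPyth : ‖x i - x j‖ ^ 2 = ‖y i - y j‖ ^ 2 + ‖w‖ ^ 2 := by
    rw [hxy, norm_add_sq_real, real_inner_comm w (y i - y j), h_orth]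
    ring
  have h_inner_w : ⟪w, x i - x j⟫ = ‖w‖ ^ 2 := by
    rw [hxy, inner_add_right, h_orth, real_inner_self_eq_norm_sq, zero_add]
  -- spectral identity
  have hcoeff : ∀ l, (⟪x l, w⟫ : ℝ) = ∑ k, ⟪v k, w⟫ * ⟪x l, v k⟫ := by
    intro l
    conv_lhs => rw [h_expand w]
    rw [inner_sum]
    exact Finset.sum_congr rfl fun k _ => by rw [real_inner_smul_right]
  have hSw : ∑ l, ⟪x l, w⟫ • x l = ∑ k, ⟪v k, w⟫ • (lam k • v k) := by
    calc ∑ l, ⟪x l, w⟫ • x l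
        = ∑ l, ∑ k, (⟪v k, w⟫ * ⟪x l, v k⟫) • x l := by
          refine Finset.sum_congr rfl fun l _ => ?_
          rw [hcoeff l, Finset.sum_smul]
      _ = ∑ k, ∑ l, (⟪v k, w⟫ * ⟪x l, v k⟫) • x l := Finset.sum_comm
      _ = ∑ k, ⟪v k, w⟫ • (lam k • v k) := by
          refine Finset.sum_congr rfl fun k _ => ?_
          rw [← heig k, Finset.smul_sum]
          refine Finset.sum_congr rfl fun l _ => ?_
          rw [smul_smul]
  have hsum_eq : ∑ l, ⟪x l, w⟫ ^ 2 = ∑ k, lam k * ⟪v k, w⟫ ^ 2 := by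
    calc ∑ l, ⟪x l, w⟫ ^ 2 = ⟪∑ l, ⟪x l, w⟫ • x l, w⟫ := by
          rw [sum_inner]
          exact Finset.sum_congr rfl fun l _ => by rw [real_inner_smul_left, sq]
      _ = ∑ k, lam k * ⟪v k, w⟫ ^ 2 := by
          rw [hSw, sum_inner]
          refine Finset.sum_congr rfl fun k _ => ?_
          rw [real_inner_smul_left, real_inner_smul_left]; ring
  have hfilter : ∑ k, lam k * ⟪v k, w⟫ ^ 2 =
      ∑ k ∈ Finset.univ.filter (fun k : Fin n => K ≤ (k : ℕ)), lam k * ⟪v k, w⟫ ^ 2 := by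
    rw [← Finset.sum_filter_add_sum_filter_not Finset.univ (fun k : Fin n => K ≤ (k : ℕ))]
    have hzero : ∑ k ∈ Finset.univ.filter (fun k : Fin n => ¬ K ≤ (k : ℕ)),
        lam k * ⟪v k, w⟫ ^ 2 = 0 := by
      refine Finset.sum_eq_zero fun k hk => ?_
      rw [hd0 k (Nat.lt_of_not_le (Finset.mem_filter.mp hk).2)]
      ring
    rw [hzero, add_zero]
  -- Cauchy–Schwarz step
  have hCS : ∑ k ∈ Finset.univ.filter (fun k : Fin n => K ≤ (k : ℕ)), lam k * ⟪v k, w⟫ ^ 2 ≤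
      Real.sqrt T * ‖w‖ ^ 2 := by
    set F := Finset.univ.filter (fun k : Fin n => K ≤ (k : ℕ)) with hF
    set A := ∑ k ∈ F, lam k * ⟪v k, w⟫ ^ 2 with hA
    have hA0 : 0 ≤ A := Finset.sum_nonneg fun k _ => mul_nonneg (hnonneg k) (sq_nonneg _)
    have h1 : A ^ 2 ≤ T * ∑ k ∈ F, (⟪v k, w⟫ ^ 2) ^ 2 :=
      Finset.sum_mul_sq_le_sq_mul_sq F lam (fun k => ⟪v k, w⟫ ^ 2)
    have h2 : ∑ k ∈ F, (⟪v k, w⟫ ^ 2) ^ 2 ≤ (∑ k ∈ F, ⟪v k, w⟫ ^ 2) ^ 2 := by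
      calc ∑ k ∈ F, (⟪v k, w⟫ ^ 2) ^ 2
          ≤ ∑ k ∈ F, ⟪v k, w⟫ ^ 2 * (∑ m ∈ F, ⟪v m, w⟫ ^ 2) := by
            refine Finset.sum_le_sum fun k hk => ?_
            rw [sq]
            exact mul_le_mul_of_nonneg_left
              (Finset.single_le_sum (f := fun m => (⟪v m, w⟫ : ℝ) ^ 2)
                (fun m _ => sq_nonneg _) hk) (sq_nonneg _)
        _ = (∑ k ∈ F, ⟪v k, w⟫ ^ 2) ^ 2 := by rw [← Finset.sum_mul, sq]
    have h3 : ∑ k ∈ F, ⟪v k, w⟫ ^ 2 ≤ ‖w‖ ^ 2 := by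
      rw [← hparseval w]
      exact Finset.sum_le_sum_of_subset_of_nonneg (Finset.subset_univ F)
        (fun k _ _ => sq_nonneg _)
    have h4 : 0 ≤ ∑ k ∈ F, ⟪v k, w⟫ ^ 2 := Finset.sum_nonneg fun k _ => sq_nonneg _
    have hs2 : Real.sqrt T ^ 2 = T := Real.sq_sqrt hT0
    have h5 : A ^ 2 ≤ (Real.sqrt T * ‖w‖ ^ 2) ^ 2 := by
      calc A ^ 2 ≤ T * ∑ k ∈ F, (⟪v k, w⟫ ^ 2) ^ 2 := h1
        _ ≤ T * (∑ k ∈ F, ⟪v k, w⟫ ^ 2) ^ 2 := mul_le_mul_of_nonneg_left h2 hT0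
        _ ≤ T * (‖w‖ ^ 2) ^ 2 := mul_le_mul_of_nonneg_left (pow_le_pow_left₀ h4 h3 2) hT0
        _ = (Real.sqrt T * ‖w‖ ^ 2) ^ 2 := by rw [mul_pow, hs2]
    exact le_of_pow_le_pow_left₀ two_ne_zero (by positivity) h5
  have hsum_bound : ∑ l, ⟪x l, w⟫ ^ 2 ≤ Real.sqrt T * ‖w‖ ^ 2 := by
    rw [hsum_eq, hfilter]; exact hCS
  have hij_sum : ⟪x i, w⟫ ^ 2 + ⟪x j, w⟫ ^ 2 ≤ ∑ l, ⟪x l, w⟫ ^ 2 := by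
    have hsub := Finset.sum_le_sum_of_subset_of_nonneg
      (Finset.subset_univ ({i, j} : Finset (Fin N)))
      (fun l _ _ => sq_nonneg (⟪x l, w⟫ : ℝ))
    rwa [Finset.sum_pair hij] at hsub
  have hw4 : ‖w‖ ^ 2 * ‖w‖ ^ 2 ≤ 2 * (Real.sqrt T * ‖w‖ ^ 2) := by
    have h5 : (‖w‖ : ℝ) ^ 2 = ⟪x i, w⟫ - ⟪x j, w⟫ := by
      rw [← h_inner_w, inner_sub_right, real_inner_comm w (x i), real_inner_comm w (x j)]
    obtain ⟨p, hp⟩ : ∃ p : ℝ, (⟪x i, w⟫ : ℝ) = p := ⟨_, rfl⟩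
    obtain ⟨q, hq⟩ : ∃ q : ℝ, (⟪x j, w⟫ : ℝ) = q := ⟨_, rfl⟩
    obtain ⟨S, hS⟩ : ∃ S : ℝ, (∑ l, ⟪x l, w⟫ ^ 2 : ℝ) = S := ⟨_, rfl⟩
    rw [hp, hq] at h5
    rw [hp, hq] at hij_sum
    rw [hS] at hij_sum hsum_bound
    nlinarith [sq_nonneg (p + q)]
  have hw2 : ‖w‖ ^ 2 ≤ 2 * Real.sqrt T := by
    rcases eq_or_lt_of_le (sq_nonneg (‖w‖ : ℝ)) with h | h
    · rw [← h]; positivity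
    · refine le_of_mul_le_mul_right ?_ h
      calc ‖w‖ ^ 2 * ‖w‖ ^ 2 ≤ 2 * (Real.sqrt T * ‖w‖ ^ 2) := hw4
        _ = 2 * Real.sqrt T * ‖w‖ ^ 2 := by ring
  obtain ⟨a, hA⟩ : ∃ a : ℝ, ‖x i - x j‖ = a := ⟨_, rfl⟩
  obtain ⟨c, hC⟩ : ∃ c : ℝ, ‖y i - y j‖ = c := ⟨_, rfl⟩
  obtain ⟨W, hW⟩ : ∃ W : ℝ, ‖w‖ = W := ⟨_, rfl⟩
  have ha0 : 0 ≤ a := hA ▸ norm_nonneg _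
  have hc0 : 0 ≤ c := hC ▸ norm_nonneg _
  have hW0 : 0 ≤ W := hW ▸ norm_nonneg _
  rw [hA, hC, hW] at hPyth
  rw [hW] at hw2
  have ha : dist (x i) (x j) = a := by rw [dist_eq_norm, hA]
  have hbd : dist (y i) (y j) = c := by rw [dist_eq_norm, hC]
  rw [ha, hbd]
  refine real_tail a c W (Real.sqrt T) _ ha0 hc0 hW0 hPyth hw2 hε0 ?_
  rw [mul_pow, Real.sq_sqrt (by norm_num : (0:ℝ) ≤ 2), Real.sq_sqrt (Real.sqrt_nonneg T)]

theorem stmt_8 (n N K : ℕ) (hN : 0 < N) (hK : K < n)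
    (x : Fin N → EuclideanSpace ℝ (Fin n))
    (lam : Fin n → ℝ)
    (hord : ∀ k l : Fin n, k ≤ l → lam l ≤ lam k)
    (hnonneg : ∀ k, 0 ≤ lam k)
    (v : Fin n → EuclideanSpace ℝ (Fin n))
    (hortho : Orthonormal ℝ v)
    (heig : ∀ k : Fin n, (∑ i, ⟪x i, v k⟫ • x i) = lam k • v k)
    (y : Fin N → EuclideanSpace ℝ (Fin n))
    (hy : ∀ i, y i =
      ∑ k ∈ Finset.univ.filter (fun k : Fin n => (k : ℕ) < K), ⟪v k, x i⟫ • v k) :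
    haveI : Nonempty (Fin N) := Fin.pos_iff_nonempty.mp hN
    GromovHausdorff.ghDist (Set.range x) (Set.range y) ≤
      Real.sqrt 2 / 2 * Real.sqrt (Real.sqrt
        (∑ k ∈ Finset.univ.filter (fun k : Fin n => K ≤ (k : ℕ)), lam k ^ 2)) := by
  haveI : Nonempty (Fin N) := Fin.pos_iff_nonempty.mp hN
  haveI : CompactSpace (Set.range x) :=
    isCompact_iff_compactSpace.mp (Set.finite_range x).isCompact
  haveI : CompactSpace (Set.range y) :=
    isCompact_iff_compactSpace.mp (Set.finite_range y).isCompact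
  haveI : Nonempty (Set.range x) := (Set.range_nonempty x).to_subtype
  haveI : Nonempty (Set.range y) := (Set.range_nonempty y).to_subtype
  set T : ℝ := ∑ k ∈ Finset.univ.filter (fun k : Fin n => K ≤ (k : ℕ)), lam k ^ 2 with hT
  set ε : ℝ := Real.sqrt 2 * Real.sqrt (Real.sqrt T) with hε
  have hyfun : ∀ i j : Fin N, x i = x j → y i = y j := by
    intro i j h
    rw [hy i, hy j, h]
  let idx : Set.range x → Fin N := fun p => p.2.choose
  have hidx : ∀ p : Set.range x, x (idx p) = (p : EuclideanSpace ℝ (Fin n)) :=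
    fun p => p.2.choose_spec
  let Φ : ↥(Set.univ : Set ↥(Set.range x)) → ↥(Set.range y) :=
    fun p => ⟨y (idx p.1), Set.mem_range_self _⟩
  have main := GromovHausdorff.ghDist_le_of_approx_subsets Φ
    (ε₁ := 0) (ε₂ := ε) (ε₃ := 0)
    (fun p => ⟨p, Set.mem_univ p, by simp⟩)
    (by
      intro q
      obtain ⟨j, hj⟩ := q.2
      refine ⟨⟨⟨x j, Set.mem_range_self j⟩, Set.mem_univ _⟩, ?_⟩
      have hxx : x (idx ⟨x j, Set.mem_range_self j⟩) = x j :=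
        hidx ⟨x j, Set.mem_range_self j⟩
      have hyy : y (idx ⟨x j, Set.mem_range_self j⟩) = y j := hyfun _ _ hxx
      have : dist (q : EuclideanSpace ℝ (Fin n)) (y (idx ⟨x j, Set.mem_range_self j⟩)) = 0 := by
        rw [hyy, ← hj, dist_self]
      rw [Subtype.dist_eq]
      exact le_of_eq this)
    (by
      intro p q
      have h1 : dist p q = dist (x (idx p.1)) (x (idx q.1)) := by
        rw [Subtype.dist_eq, Subtype.dist_eq, hidx p.1, hidx q.1]
      have h2 : dist (Φ p) (Φ q) = dist (y (idx p.1)) (y (idx q.1)) := by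
        rw [Subtype.dist_eq]
      rw [h1, h2]
      exact key_dist hK x lam hnonneg v hortho heig y hy _ _)
  refine le_trans main ?_
  rw [zero_add, add_zero, hε]
  rw [show Real.sqrt 2 * Real.sqrt (Real.sqrt T) / 2
      = Real.sqrt 2 / 2 * Real.sqrt (Real.sqrt T) by ring]
end

section
/- Let f₁ : ℝ → ℝ be differentiable with |f₁(s)| ≤ B and |f₁'(s)| ≤ L for all s ∈ ℝ. Let w₂ ∈ ℕ with w₂ ≥ 1, let ε > 0, set 𝓜 = ⌈2π/(w₂ε)⌉ and τ(M) = 2π/(w₂(M+1)), and let M₁, M₂ ∈ ℕ with M₂ > M₁ ≥ 𝓜. Fix t ∈ ℝ. Let u ∈ ℝ^{M₂+1} be the zero-padded vector with uᵢ = f₁(t + (i−1)τ(M₁)) for i = 1,…,M₁+1 and uᵢ = 0 for i = M₁+2,…,M₂+1, and let v ∈ ℝ^{M₂+1} have vᵢ = f₁(t + (i−1)τ(M₂)) for i = 1,…,M₂+1. Then ‖u − v‖₂ ≤ ε · L · (M₁+1)^{3/2} + B · √(M₂ − M₁). -/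
set_option maxHeartbeats 1000000

theorem stmt_12 (f₁ : ℝ → ℝ) (B L : ℝ)
    (hdiff : Differentiable ℝ f₁)
    (hB : ∀ s : ℝ, |f₁ s| ≤ B)
    (hL : ∀ s : ℝ, |deriv f₁ s| ≤ L)
    (w₂ : ℕ) (hw₂ : 1 ≤ w₂) (ε : ℝ) (hε : 0 < ε)
    (M₁ M₂ : ℕ) (hM₁ : ⌈2 * Real.pi / ((w₂ : ℝ) * ε)⌉₊ ≤ M₁) (hM₂ : M₁ < M₂)
    (t : ℝ)
    (u v : EuclideanSpace ℝ (Fin (M₂ + 1)))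
    (hu : ∀ i : Fin (M₂ + 1), u i =
      if (i : ℕ) ≤ M₁ then f₁ (t + (i : ℕ) * (2 * Real.pi / ((w₂ : ℝ) * ((M₁ : ℝ) + 1))))
      else 0)
    (hv : ∀ i : Fin (M₂ + 1),
      v i = f₁ (t + (i : ℕ) * (2 * Real.pi / ((w₂ : ℝ) * ((M₂ : ℝ) + 1))))) :
    ‖u - v‖ ≤ ε * L * Real.sqrt (((M₁ : ℝ) + 1) ^ 3)
      + B * Real.sqrt ((M₂ : ℝ) - (M₁ : ℝ)) := by
  have hL0 : 0 ≤ L := le_trans (abs_nonneg _) (hL 0)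
  have hB0 : 0 ≤ B := le_trans (abs_nonneg _) (hB 0)
  have hw : (0:ℝ) < (w₂:ℝ) := by exact_mod_cast hw₂
  have hpi := Real.pi_pos
  have lip : LipschitzWith ⟨L, hL0⟩ f₁ :=
    lipschitzWith_of_nnnorm_deriv_le hdiff (fun x => by
      apply NNReal.coe_le_coe.mp
      exact (by simpa [Real.norm_eq_abs] using hL x : ‖deriv f₁ x‖ ≤ L))
  -- 2π/w₂ ≤ ε * (M₁ + 1)
  have hceil : 2 * Real.pi / ((w₂:ℝ) * ε) ≤ (M₁:ℝ) := by
    calc 2 * Real.pi / ((w₂:ℝ) * ε) ≤ (⌈2 * Real.pi / ((w₂:ℝ) * ε)⌉₊ : ℝ) :=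
          Nat.le_ceil _
      _ ≤ (M₁:ℝ) := by exact_mod_cast hM₁
  have hkey : 2 * Real.pi / (w₂:ℝ) ≤ ε * ((M₁:ℝ) + 1) := by
    have h1 : 2 * Real.pi / (w₂:ℝ) ≤ ε * (M₁:ℝ) := by
      rw [div_le_iff₀ (by positivity : (0:ℝ) < (w₂:ℝ) * ε)] at hceil
      rw [div_le_iff₀ hw]
      nlinarith
    nlinarith
  set τ₁ : ℝ := 2 * Real.pi / ((w₂:ℝ) * ((M₁:ℝ) + 1)) with hτ₁
  set τ₂ : ℝ := 2 * Real.pi / ((w₂:ℝ) * ((M₂:ℝ) + 1)) with hτ₂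
  have hM₁pos : (0:ℝ) < (M₁:ℝ) + 1 := by positivity
  have hM₂pos : (0:ℝ) < (M₂:ℝ) + 1 := by positivity
  have hτ₁pos : 0 ≤ τ₁ := by positivity
  have hτ₂pos : 0 ≤ τ₂ := by positivity
  have hτle : τ₂ ≤ τ₁ := by
    apply div_le_div_of_nonneg_left (by positivity) (by positivity)
    have : (M₁:ℝ) ≤ (M₂:ℝ) := by exact_mod_cast hM₂.le
    nlinarith
  set A : ℝ := ε * L * ((M₁:ℝ) + 1) with hA
  have hA0 : 0 ≤ A := by positivity
  have hcoord : ∀ i : Fin (M₂ + 1),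
      ‖(u - v) i‖ ≤ if (i:ℕ) ≤ M₁ then A else B := by
    intro i
    have huv : (u - v) i = u i - v i := rfl
    rw [huv, hu i, hv i]
    by_cases h : (i:ℕ) ≤ M₁
    · simp only [h, if_true]
      have hdist := lip.dist_le_mul (t + (i:ℕ) * τ₁) (t + (i:ℕ) * τ₂)
      rw [Real.dist_eq, Real.dist_eq] at hdist
      have hiτ : |t + (i:ℕ) * τ₁ - (t + (i:ℕ) * τ₂)| ≤ ε * ((M₁:ℝ) + 1) := by
        have hiM : ((i:ℕ):ℝ) ≤ (M₁:ℝ) := by exact_mod_cast h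
        have h1 : t + (i:ℕ) * τ₁ - (t + (i:ℕ) * τ₂) = (i:ℕ) * (τ₁ - τ₂) := by ring
        rw [h1, abs_of_nonneg (by nlinarith [sub_nonneg.mpr hτle])]
        have h2 : ((i:ℕ):ℝ) * (τ₁ - τ₂) ≤ ((M₁:ℝ) + 1) * τ₁ := by
          nlinarith [sub_nonneg.mpr hτle, mul_nonneg (Nat.cast_nonneg (i:ℕ)) hτ₂pos]
        have h3 : ((M₁:ℝ) + 1) * τ₁ = 2 * Real.pi / (w₂:ℝ) := by
          rw [hτ₁]; field_simp
        calc ((i:ℕ):ℝ) * (τ₁ - τ₂) ≤ ((M₁:ℝ) + 1) * τ₁ := h2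
          _ = 2 * Real.pi / (w₂:ℝ) := h3
          _ ≤ ε * ((M₁:ℝ) + 1) := hkey
      have : |f₁ (t + (i:ℕ) * τ₁) - f₁ (t + (i:ℕ) * τ₂)| ≤ L * (ε * ((M₁:ℝ) + 1)) := by
        calc |f₁ (t + (i:ℕ) * τ₁) - f₁ (t + (i:ℕ) * τ₂)|
            ≤ L * |t + (i:ℕ) * τ₁ - (t + (i:ℕ) * τ₂)| := by exact hdist
          _ ≤ L * (ε * ((M₁:ℝ) + 1)) := by
              exact mul_le_mul_of_nonneg_left hiτ hL0
      rw [Real.norm_eq_abs]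
      calc |f₁ (t + (i:ℕ) * τ₁) - f₁ (t + (i:ℕ) * τ₂)| ≤ L * (ε * ((M₁:ℝ) + 1)) := this
        _ = A := by rw [hA]; ring
    · simp only [h, if_false, zero_sub, Real.norm_eq_abs, abs_neg]
      exact hB (t + (i:ℕ) * τ₂)
  -- norm bound
  have hnorm : ‖u - v‖ =
      Real.sqrt (∑ i : Fin (M₂ + 1), ‖(u - v) i‖ ^ 2) := by
    rw [EuclideanSpace.norm_eq]
  have hsum : ∑ i : Fin (M₂ + 1), ‖(u - v) i‖ ^ 2 ≤
      ((M₁:ℝ) + 1) * A ^ 2 + ((M₂:ℝ) - (M₁:ℝ)) * B ^ 2 := by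
    have step1 : ∑ i : Fin (M₂ + 1), ‖(u - v) i‖ ^ 2 ≤
        ∑ i : Fin (M₂ + 1), (if (i:ℕ) ≤ M₁ then A ^ 2 else B ^ 2) := by
      apply Finset.sum_le_sum
      intro i _
      by_cases h : (i:ℕ) ≤ M₁
      · simp only [h, if_true]
        have := hcoord i; simp only [h, if_true] at this
        exact pow_le_pow_left₀ (norm_nonneg _) this 2
      · simp only [h, if_false]
        have := hcoord i; simp only [h, if_false] at this
        exact pow_le_pow_left₀ (norm_nonneg _) this 2
    have step2 : ∑ i : Fin (M₂ + 1), (if (i:ℕ) ≤ M₁ then A ^ 2 else B ^ 2) =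
        ((M₁:ℝ) + 1) * A ^ 2 + ((M₂:ℝ) - (M₁:ℝ)) * B ^ 2 := by
      rw [Fin.sum_univ_eq_sum_range (fun i => if i ≤ M₁ then A ^ 2 else B ^ 2) (M₂ + 1)]
      rw [← Finset.sum_range_add_sum_Ico _ (show M₁ + 1 ≤ M₂ + 1 by omega)]
      have e1 : ∑ i ∈ Finset.range (M₁ + 1), (if i ≤ M₁ then A ^ 2 else B ^ 2)
          = ((M₁:ℝ) + 1) * A ^ 2 := by
        rw [Finset.sum_congr rfl (fun i hi => by
          rw [if_pos (by simpa [Nat.lt_succ_iff] using Finset.mem_range.mp hi)])]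
        rw [Finset.sum_const, Finset.card_range]
        push_cast; ring
      have e2 : ∑ i ∈ Finset.Ico (M₁ + 1) (M₂ + 1), (if i ≤ M₁ then A ^ 2 else B ^ 2)
          = ((M₂:ℝ) - (M₁:ℝ)) * B ^ 2 := by
        rw [Finset.sum_congr rfl (fun i hi => by
          rw [if_neg (by have := (Finset.mem_Ico.mp hi).1; omega)])]
        rw [Finset.sum_const, Nat.card_Ico]
        have : ((M₂ + 1 - (M₁ + 1) : ℕ) : ℝ) = (M₂:ℝ) - (M₁:ℝ) := by
          have : M₂ + 1 - (M₁ + 1) = M₂ - M₁ := by omega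
          rw [this, Nat.cast_sub hM₂.le]
        rw [nsmul_eq_mul, this]
      rw [e1, e2]
    exact le_of_le_of_eq step1 step2
  rw [hnorm]
  have sqrt_split : Real.sqrt (((M₁:ℝ) + 1) * A ^ 2 + ((M₂:ℝ) - (M₁:ℝ)) * B ^ 2) ≤
      Real.sqrt (((M₁:ℝ) + 1) * A ^ 2) + Real.sqrt (((M₂:ℝ) - (M₁:ℝ)) * B ^ 2) := by
    have hx : 0 ≤ ((M₁:ℝ) + 1) * A ^ 2 := by positivity
    have hy : 0 ≤ ((M₂:ℝ) - (M₁:ℝ)) * B ^ 2 := by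
      have : (M₁:ℝ) ≤ (M₂:ℝ) := by exact_mod_cast hM₂.le
      have := sub_nonneg.mpr this
      positivity
    calc Real.sqrt (((M₁:ℝ) + 1) * A ^ 2 + ((M₂:ℝ) - (M₁:ℝ)) * B ^ 2)
        ≤ Real.sqrt ((Real.sqrt (((M₁:ℝ) + 1) * A ^ 2) +
            Real.sqrt (((M₂:ℝ) - (M₁:ℝ)) * B ^ 2)) ^ 2) := by
          apply Real.sqrt_le_sqrt
          rw [add_sq, Real.sq_sqrt hx, Real.sq_sqrt hy]
          nlinarith [Real.sqrt_nonneg (((M₁:ℝ) + 1) * A ^ 2),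
            Real.sqrt_nonneg (((M₂:ℝ) - (M₁:ℝ)) * B ^ 2)]
      _ = Real.sqrt (((M₁:ℝ) + 1) * A ^ 2) + Real.sqrt (((M₂:ℝ) - (M₁:ℝ)) * B ^ 2) := by
          exact Real.sqrt_sq (by positivity)
  have hfirst : Real.sqrt (((M₁:ℝ) + 1) * A ^ 2) = ε * L * Real.sqrt (((M₁:ℝ) + 1) ^ 3) := by
    have : ((M₁:ℝ) + 1) * A ^ 2 = (ε * L) ^ 2 * ((M₁:ℝ) + 1) ^ 3 := by rw [hA]; ring
    rw [this, Real.sqrt_mul (sq_nonneg _), Real.sqrt_sq (by positivity)]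
  have hsecond : Real.sqrt (((M₂:ℝ) - (M₁:ℝ)) * B ^ 2) = B * Real.sqrt ((M₂:ℝ) - (M₁:ℝ)) := by
    rw [mul_comm, Real.sqrt_mul (sq_nonneg _), Real.sqrt_sq hB0]
  calc Real.sqrt (∑ i : Fin (M₂ + 1), ‖(u - v) i‖ ^ 2)
      ≤ Real.sqrt (((M₁:ℝ) + 1) * A ^ 2 + ((M₂:ℝ) - (M₁:ℝ)) * B ^ 2) :=
        Real.sqrt_le_sqrt hsum
    _ ≤ Real.sqrt (((M₁:ℝ) + 1) * A ^ 2) + Real.sqrt (((M₂:ℝ) - (M₁:ℝ)) * B ^ 2) := sqrt_split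
    _ = ε * L * Real.sqrt (((M₁:ℝ) + 1) ^ 3) + B * Real.sqrt ((M₂:ℝ) - (M₁:ℝ)) := by
        rw [hfirst, hsecond]
end
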